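/- arXiv:1711.00737 — 2 statements merged into one kernel-verified Lean document; each statement's English description precedes it below -/
import Mathlib

section
/- Suppose R'(0) < 0, r ≥ −F'(0)/R'(0), and the case hypothesis (P4) holds. Then the yield curve x ↦ Y(x,r) is strictly decreasing on (0,∞) (the yield curve is inverse). -/
open Filter Set

/-!
Write `φ = A + r • B`. Since `φ 0 = 0`, `-Y(x, r)` is the slope of the secant of `φ` from `0` to
`x`, so it suffices that `φ` is strictly convex on `[0, ∞)`. Now `φ' = h ∘ B` with
`h u = F u + r (R u - 1)`. Under (P4) the derivative `F' + r R'` of `h` is strictly increasing on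
`[c, 0]`, and it is `≤ 0` at `0` by the bound on `r`; hence `h` is strictly decreasing on `[c, 0]`
and, `B` being strictly decreasing, `φ'` is strictly increasing.
-/

theorem StrictMonoOn.add_mul_of_pos {s : Set ℝ} {f g : ℝ → ℝ} {r : ℝ}
    (hf : MonotoneOn f s) (hg : MonotoneOn g s) (hfg : StrictMonoOn f s ∨ StrictMonoOn g s)
    (hr : 0 < r) : StrictMonoOn (fun u => f u + r * g u) s := by
  rcases hfg with hf' | hg'
  · exact hf'.add_monotone fun x hx y hy hxy => mul_le_mul_of_nonneg_left (hg hx hy hxy) hr.le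
  · exact hf.add_strictMono fun x hx y hy hxy => mul_lt_mul_of_pos_left (hg' hx hy hxy) hr

theorem strictAntiOn_Icc_of_strictMonoOn_deriv {f : ℝ → ℝ} {a b : ℝ}
    (hd : ∀ x ∈ Icc a b, DifferentiableAt ℝ f x) (hf' : StrictMonoOn (deriv f) (Icc a b))
    (hb : deriv f b ≤ 0) : StrictAntiOn f (Icc a b) := by
  refine strictAntiOn_of_deriv_neg (convex_Icc a b)
    (fun x hx => (hd x hx).continuousAt.continuousWithinAt) fun x hx => ?_
  rw [interior_Icc] at hx
  have hxb := hf' (Ioo_subset_Icc_self hx) ⟨(hx.1.trans hx.2).le, le_rfl⟩ hx.2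
  linarith

theorem hasDerivWithinAt_integral_Ici {f : ℝ → ℝ} {a x : ℝ} (hf : ContinuousOn f (Ici a))
    (hx : a ≤ x) : HasDerivWithinAt (fun u => ∫ t in a..u, f t) (f x) (Ici a) x := by
  have hxI : Fact (x ∈ Icc a (x + 1)) := ⟨hx, by linarith⟩
  have hIcc : ContinuousOn f (Icc a (x + 1)) := hf.mono Icc_subset_Ici_self
  refine (intervalIntegral.integral_hasDerivWithinAt_right (s := Icc a (x + 1))
    ((hf.mono (by rw [uIcc_of_le hx]; exact Icc_subset_Ici_self)).intervalIntegrable)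
    (hIcc.stronglyMeasurableAtFilter_nhdsWithin measurableSet_Icc x)
    (hIcc x hxI.out)).mono_of_mem_nhdsWithin ?_
  rw [← Ici_inter_Iic]
  exact inter_mem_nhdsWithin _ (Iic_mem_nhds (lt_add_one x))

theorem strictConvexOn_Ici_of_hasDerivWithinAt {f f' : ℝ → ℝ} {a : ℝ}
    (hf : ∀ x ≥ a, HasDerivWithinAt f (f' x) (Ici a) x) (hf' : StrictMonoOn f' (Ioi a)) :
    StrictConvexOn ℝ (Ici a) f := by
  refine StrictMonoOn.strictConvexOn_of_deriv (convex_Ici a)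
    (fun x hx => (hf x hx).continuousWithinAt) ?_
  rw [interior_Ici]
  exact hf'.congr fun x hx => ((hf x hx.le).hasDerivAt (Ici_mem_nhds hx)).deriv.symm

theorem StrictConvexOn.strictMonoOn_div_self {f : ℝ → ℝ} (hf : StrictConvexOn ℝ (Ici 0) f)
    (h0 : f 0 = 0) : StrictMonoOn (fun x => f x / x) (Ioi 0) := by
  intro x hx y hy hxy
  simpa [h0] using hf.secant_strict_mono (a := 0) self_mem_Ici (Ioi_subset_Ici_self hx)
    (Ioi_subset_Ici_self hy) hx.ne' hy.ne' hxy

theorem strictMonoOn_deriv_add_mul_deriv {F R : ℝ → ℝ} {s : Set ℝ} {r k : ℝ} (hs : s.Nontrivial)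
    (hF : ConvexOn ℝ s F) (hR : ConvexOn ℝ s R)
    (hFd : ∀ u ∈ s, DifferentiableAt ℝ F u) (hRd : ∀ u ∈ s, DifferentiableAt ℝ R u)
    (hstrict : StrictConvexOn ℝ s F ∨ StrictConvexOn ℝ s R)
    (hr : 0 < r ∨ ∀ u, R u = u / k) :
    StrictMonoOn (fun u => deriv F u + r * deriv R u) s := by
  rcases hr with hr | hRlin
  · exact StrictMonoOn.add_mul_of_pos (hF.monotoneOn_deriv hFd) (hR.monotoneOn_deriv hRd)
      (hstrict.imp (·.strictMonoOn_deriv hFd) (·.strictMonoOn_deriv hRd)) hr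
  have hR' : ∀ u, deriv R u = 1 / k := fun u => by
    rw [show R = fun u => u / k from funext hRlin]
    simp
  have hF' : StrictMonoOn (deriv F) s := by
    refine hstrict.elim (·.strictMonoOn_deriv hFd) fun hRs => ?_
    obtain ⟨x, hx, y, hy, hxy⟩ := hs.exists_lt
    simpa [hR'] using hRs.strictMonoOn_deriv hRd hx hy hxy
  intro x hx y hy hxy
  simp only [hR']
  linarith [hF' hx hy hxy]

theorem strictAntiOn_add_mul_sub_one {F R : ℝ → ℝ} {c r : ℝ} (hc : c < 0)
    (hF : ConvexOn ℝ (Icc c 0) F) (hR : ConvexOn ℝ (Icc c 0) R)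
    (hFd : ∀ u ∈ Icc c 0, DifferentiableAt ℝ F u) (hRd : ∀ u ∈ Icc c 0, DifferentiableAt ℝ R u)
    (hstrict : StrictConvexOn ℝ (Icc c 0) F ∨ StrictConvexOn ℝ (Icc c 0) R)
    (hP4 : (0 ≤ r ∧ 0 < deriv F 0) ∨ ∀ u, R u = u / c)
    (hR'0 : deriv R 0 < 0) (hr : -deriv F 0 / deriv R 0 ≤ r) :
    StrictAntiOn (fun u => F u + r * (R u - 1)) (Icc c 0) := by
  have hderiv : ∀ u ∈ Icc c 0, deriv (fun u => F u + r * (R u - 1)) u =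
      deriv F u + r * deriv R u := fun u hu =>
    (((hFd u hu).hasDerivAt.add (((hRd u hu).hasDerivAt.sub_const 1).const_mul r))).deriv
  have hr' : 0 < r ∨ ∀ u, R u = u / c := hP4.imp_left fun ⟨_, hF'0⟩ =>
    (div_pos_of_neg_of_neg (neg_neg_of_pos hF'0) hR'0).trans_le hr
  have h0 : (0 : ℝ) ∈ Icc c 0 := right_mem_Icc.2 hc.le
  refine strictAntiOn_Icc_of_strictMonoOn_deriv
    (fun u hu => (hFd u hu).add (((hRd u hu).sub_const 1).const_mul r)) ?_ ?_
  · exact (strictMonoOn_deriv_add_mul_deriv (nontrivial_of_lt (left_mem_Icc.2 hc.le) h0 hc)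
      hF hR hFd hRd hstrict hr').congr fun u hu => (hderiv u hu).symm
  · rw [hderiv 0 h0]
    linarith [(div_le_iff_of_neg hR'0).mp hr]

theorem yield_curve_inverse_general
(c : ℝ) (hc : c < 0)
    (F R : ℝ → ℝ) (ε : ℝ) (hε : 0 < ε)
    (hFconv : ConvexOn ℝ (Set.Ioo (c - ε) ε) F)
    (hRconv : ConvexOn ℝ (Set.Ioo (c - ε) ε) R)
    (hFC1 : ContDiffOn ℝ 1 F (Set.Ioo (c - ε) ε))
    (hRC1 : ContDiffOn ℝ 1 R (Set.Ioo (c - ε) ε))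
    (hstrict : StrictConvexOn ℝ (Set.Icc c 0) F ∨ StrictConvexOn ℝ (Set.Icc c 0) R)
    (B : ℝ → ℝ) (hB0 : B 0 = 0)
    (hBode : ∀ x ≥ (0:ℝ), HasDerivAt B (R (B x) - 1) x)
    (hBanti : StrictAntiOn B (Set.Ici 0))
    (hBrange : ∀ x ≥ (0:ℝ), B x ∈ Set.Ioc c 0)
    (A : ℝ → ℝ) (hA : ∀ x, A x = ∫ s in (0:ℝ)..x, F (B s))
    (r : ℝ) (Y : ℝ → ℝ → ℝ)
    (hY : ∀ x r', Y x r' = -(A x + r' * B x) / x)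
    (hP4 : (0 ≤ r ∧ 0 < deriv F 0) ∨ (∀ u, R u = u / c))
    (hR'0 : deriv R 0 < 0)
    (hr : -(deriv F 0) / deriv R 0 ≤ r) :
    StrictAntiOn (fun x => Y x r) (Set.Ioi 0) := by
  have hsub : Icc c 0 ⊆ Ioo (c - ε) ε := fun u hu => ⟨by linarith [hu.1], hu.2.trans_lt hε⟩
  have hmem : ∀ u ∈ Icc c 0, Ioo (c - ε) ε ∈ nhds u := fun u hu => isOpen_Ioo.mem_nhds (hsub hu)
  have hBmaps : MapsTo B (Ici 0) (Icc c 0) := fun x hx => Ioc_subset_Icc_self (hBrange x hx)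
  have hdecr := strictAntiOn_add_mul_sub_one hc (hFconv.subset hsub (convex_Icc c 0))
    (hRconv.subset hsub (convex_Icc c 0))
    (fun u hu => (hFC1.contDiffAt (hmem u hu)).differentiableAt one_ne_zero)
    (fun u hu => (hRC1.contDiffAt (hmem u hu)).differentiableAt one_ne_zero) hstrict hP4 hR'0 hr
  have hFB : ContinuousOn (fun x => F (B x)) (Ici 0) := fun x hx =>
    ((hFC1.continuousOn.continuousAt (hmem _ (hBmaps hx))).comp
      (hBode x hx).continuousAt).continuousWithinAt
  have hφ : ∀ x ≥ (0 : ℝ), HasDerivWithinAt (fun x => A x + r * B x)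
      (F (B x) + r * (R (B x) - 1)) (Ici 0) x := fun x hx => by
    simp only [hA]
    exact (hasDerivWithinAt_integral_Ici hFB hx).add ((hBode x hx).hasDerivWithinAt.const_mul r)
  have hφ' : StrictMonoOn (fun x => F (B x) + r * (R (B x) - 1)) (Ioi 0) :=
    hdecr.comp (hBanti.mono Ioi_subset_Ici_self) (hBmaps.mono_left Ioi_subset_Ici_self)
  have hslope := (strictConvexOn_Ici_of_hasDerivWithinAt hφ hφ').strictMonoOn_div_self
    (by simp [hA, hB0])
  intro x hx y hy hxy
  simp only [hY, neg_div]
  exact neg_lt_neg (hslope hx hy hxy)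

/-- If `R'(0) < 0`, `r ≥ −F'(0)/R'(0)`, and (P4) holds, then the yield curve
`x ↦ Y x r` is strictly decreasing on `(0,∞)` (the yield curve is inverse). -/
theorem yield_curve_inverse
(c : ℝ) (hc : c < 0)
    (F R : ℝ → ℝ) (ε : ℝ) (hε : 0 < ε)
    (hFconv : ConvexOn ℝ (Set.Ioo (c - ε) ε) F)
    (hRconv : ConvexOn ℝ (Set.Ioo (c - ε) ε) R)
    (hFC1 : ContDiffOn ℝ 1 F (Set.Ioo (c - ε) ε))
    (hRC1 : ContDiffOn ℝ 1 R (Set.Ioo (c - ε) ε))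
    (hF0 : F 0 = 0) (hR0 : R 0 = 0) (hRc : R c = 1)
    (hRlt1 : ∀ u ∈ Set.Ioc c 0, R u < 1)
    (hR'c : deriv R c < 0)
    (hFne : ∃ u ∈ Set.Icc c 0, F u ≠ 0)
    (hstrict : StrictConvexOn ℝ (Set.Icc c 0) F ∨ StrictConvexOn ℝ (Set.Icc c 0) R)
    (B : ℝ → ℝ) (hB0 : B 0 = 0)
    (hBode : ∀ x ≥ (0:ℝ), HasDerivAt B (R (B x) - 1) x)
    (hBanti : StrictAntiOn B (Set.Ici 0))
    (hBrange : ∀ x ≥ (0:ℝ), B x ∈ Set.Ioc c 0)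
    (hBlim : Tendsto B atTop (nhds c))
    (A : ℝ → ℝ) (hA : ∀ x, A x = ∫ s in (0:ℝ)..x, F (B s))
    (r : ℝ) (Y : ℝ → ℝ → ℝ)
    (hY : ∀ x r', Y x r' = -(A x + r' * B x) / x)
    (hP4 : (0 ≤ r ∧ 0 < deriv F 0) ∨ (∀ u, R u = u / c))
    (hR'0 : deriv R 0 < 0)
    (hr : -(deriv F 0) / deriv R 0 ≤ r) :
    StrictAntiOn (fun x => Y x r) (Set.Ioi 0) :=
  yield_curve_inverse_general c hc F R ε hε hFconv hRconv hFC1 hRC1 hstrict B hB0 hBode hBanti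
    hBrange A hA r Y hY hP4 hR'0 hr
end

section
/- Define M(x) = (A(x) − x·F(B(x))) + r·(B(x) − x·(R(B(x)) − 1)) for x ≥ 0. Then M(x) converges as x → ∞ to −∫_c^0 (F(u) − F(c))/(R(u) − 1) du + r·c, and this limit is strictly negative if and only if r > (1/c)·∫_c^0 (F(u) − F(c))/(R(u) − 1) du. -/
/-!
Substituting `u = B s` (so `ds = du / (R u - 1)`) gives
`A x - x F(B x) = ∫_0^{B x} (F u - F c)/(R u - 1) du - x (F(B x) - F c)`.
Convexity of `R` between `R c = 1` and `R 0 = 0` gives the chord bound `u - c ≤ -c (1 - R u)`,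
which makes the integrand bounded, so the integral tends to `-∫_c^0 …`, and which makes `B x - c`
decay exponentially (Grönwall), so `x (B x - c) → 0`. Since `F` and `R` are Lipschitz near `c`,
the terms `x (F(B x) - F c)` and `x (R(B x) - R c)` then tend to `0` as well.
-/

open Filter Set Topology MeasureTheory NNReal

theorem le_mul_exp_of_hasDerivAt_le {f f' : ℝ → ℝ} {k x : ℝ}
    (hf : ∀ t ≥ 0, HasDerivAt f (f' t) t) (hf' : ∀ t ≥ 0, f' t ≤ k * f t) (hx : 0 ≤ x) :
    f x ≤ f 0 * Real.exp (k * x) := by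
  have h := le_gronwallBound_of_liminf_deriv_right_le (a := 0) (b := x) (ε := 0) (δ := f 0)
    (fun t ht => (hf t ht.1).continuousAt.continuousWithinAt)
    (fun t ht _ hr => (hf t ht.1).hasDerivWithinAt.liminf_right_slope_le hr) le_rfl
    (fun t ht => by simpa using hf' t ht.1) x ⟨hx, le_rfl⟩
  rwa [gronwallBound_ε0, sub_zero] at h

theorem tendsto_mul_self_of_le_mul_neg_deriv {f f' : ℝ → ℝ} {m : ℝ} (hm : 0 < m)
    (hf : ∀ t ≥ 0, HasDerivAt f (f' t) t) (hf' : ∀ t ≥ 0, f t ≤ m * -f' t)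
    (hf0 : ∀ t ≥ 0, 0 ≤ f t) : Tendsto (fun x => x * f x) atTop (𝓝 0) := by
  have hdecay : ∀ t ≥ 0, f' t ≤ -m⁻¹ * f t := fun t ht => by
    rw [neg_mul, inv_mul_eq_div, le_neg, div_le_iff₀ hm]
    linarith [hf' t ht]
  have hexp : Tendsto (fun x => f 0 * (x * Real.exp (-m⁻¹ * x))) atTop (𝓝 0) := by
    simpa using (tendsto_rpow_mul_exp_neg_mul_atTop_nhds_zero 1 _ (inv_pos.2 hm)).const_mul (f 0)
  refine squeeze_zero' ?_ ?_ hexp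
  · filter_upwards [eventually_ge_atTop 0] with x hx using mul_nonneg hx (hf0 x hx)
  · filter_upwards [eventually_ge_atTop 0] with x hx
    calc x * f x ≤ x * (f 0 * Real.exp (-m⁻¹ * x)) :=
          mul_le_mul_of_nonneg_left (le_mul_exp_of_hasDerivAt_le hf hdecay hx) hx
      _ = f 0 * (x * Real.exp (-m⁻¹ * x)) := by ring

theorem LipschitzOnWith.tendsto_mul_sub {α : Type*} {l : Filter α} {φ : ℝ → ℝ} {K : ℝ≥0}
    {s : Set ℝ} {c : ℝ} {g B : α → ℝ} (hφ : LipschitzOnWith K φ s) (hc : c ∈ s)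
    (hBs : ∀ᶠ x in l, B x ∈ s) (hB : Tendsto (fun x => g x * (B x - c)) l (𝓝 0)) :
    Tendsto (fun x => g x * (φ (B x) - φ c)) l (𝓝 0) := by
  refine squeeze_zero_norm' ?_ (by simpa using hB.norm.const_mul (K : ℝ))
  filter_upwards [hBs] with x hx
  have h := hφ.dist_le_mul _ hx _ hc
  rw [Real.dist_eq, Real.dist_eq] at h
  rw [norm_mul, Real.norm_eq_abs, Real.norm_eq_abs, mul_left_comm]
  exact mul_le_mul_of_nonneg_left h (abs_nonneg _)

theorem ConvexOn.sub_le_neg_mul_one_sub {s : Set ℝ} {R : ℝ → ℝ} {c u : ℝ}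
    (hR : ConvexOn ℝ s R) (hc : c ∈ s) (h0 : 0 ∈ s) (hRc : R c = 1) (hR0 : R 0 = 0)
    (hu : u ∈ Ioc c 0) : u - c ≤ -c * (1 - R u) := by
  rcases hu.2.lt_or_eq with hu0 | rfl
  · have h := hR.secant_mono_aux1 hc h0 hu.1 hu0
    rw [hRc, hR0] at h
    linarith
  · simp [hR0]

theorem intervalIntegrable_of_continuousOn_Ioc_of_norm_le {E : Type*} [NormedAddCommGroup E]
    {g : ℝ → E} {a b C : ℝ} (hab : a ≤ b) (hg : ContinuousOn g (Ioc a b))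
    (hC : ∀ u ∈ Ioc a b, ‖g u‖ ≤ C) : IntervalIntegrable g volume a b :=
  (intervalIntegrable_iff_integrableOn_Ioc_of_le hab).2 <|
    IntegrableOn.of_bound measure_Ioc_lt_top (hg.aestronglyMeasurable measurableSet_Ioc) C
      (ae_restrict_of_forall_mem measurableSet_Ioc hC)

theorem intervalIntegrable_sub_div_sub_one {F R : ℝ → ℝ} {K : ℝ≥0} {a b m : ℝ} (hab : a ≤ b)
    (hF : LipschitzOnWith K F (Icc a b)) (hR : ContinuousOn R (Icc a b))
    (hR1 : ∀ u ∈ Ioc a b, R u < 1) (hgap : ∀ u ∈ Ioc a b, u - a ≤ m * (1 - R u)) :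
    IntervalIntegrable (fun u => (F u - F a) / (R u - 1)) volume a b := by
  refine intervalIntegrable_of_continuousOn_Ioc_of_norm_le hab ?_ (C := K * m) ?_
  · exact ((hF.continuousOn.sub continuousOn_const).mono Ioc_subset_Icc_self).div
      ((hR.sub continuousOn_const).mono Ioc_subset_Icc_self) fun u hu => (sub_neg.2 (hR1 u hu)).ne
  · intro u hu
    have hF' := hF.dist_le_mul _ (Ioc_subset_Icc_self hu) _ (left_mem_Icc.2 hab)
    rw [Real.dist_eq, Real.dist_eq, abs_of_pos (sub_pos.2 hu.1)] at hF'
    rw [Real.norm_eq_abs, abs_div, abs_of_neg (sub_neg.2 (hR1 u hu)), neg_sub,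
      div_le_iff₀ (sub_pos.2 (hR1 u hu)), mul_assoc]
    exact hF'.trans (mul_le_mul_of_nonneg_left (hgap u hu) K.2)

theorem integral_comp_eq_integral_div_of_hasDerivAt {B v g : ℝ → ℝ} {s : Set ℝ} {a b : ℝ}
    (hB : ∀ t ∈ uIcc a b, HasDerivAt B (v (B t)) t) (hBs : MapsTo B (uIcc a b) s)
    (hv : ContinuousOn v s) (hv0 : ∀ u ∈ s, v u ≠ 0) (hg : ContinuousOn g s) :
    ∫ t in a..b, g (B t) = ∫ u in B a..B b, g u / v u := by
  have hBc : ContinuousOn B (uIcc a b) := fun t ht => (hB t ht).continuousAt.continuousWithinAt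
  rw [← intervalIntegral.integral_comp_mul_deriv' (g := fun u => g u / v u) hB
    (hv.comp hBc hBs) ((hg.div hv hv0).mono hBs.image_subset)]
  refine intervalIntegral.integral_congr fun t ht => ?_
  simp [div_mul_cancel₀ _ (hv0 _ (hBs ht))]

theorem integral_comp_sub_mul_eq_integral_div {F R B : ℝ → ℝ} {s : Set ℝ} {y x : ℝ}
    (hx : 0 ≤ x) (hF : ContinuousOn F s) (hR : ContinuousOn R s) (hR1 : ∀ u ∈ s, R u < 1)
    (hB : ∀ t ≥ 0, HasDerivAt B (R (B t) - 1) t) (hBs : ∀ t ≥ 0, B t ∈ s) :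
    (∫ t in (0:ℝ)..x, F (B t)) - x * F y = ∫ u in B 0..B x, (F u - F y) / (R u - 1) := by
  have hB' : ∀ t ∈ uIcc 0 x, HasDerivAt B (R (B t) - 1) t := fun t ht =>
    hB t (uIcc_of_le hx ▸ ht).1
  have hBs' : MapsTo B (uIcc 0 x) s := fun t ht => hBs t (uIcc_of_le hx ▸ ht).1
  have hFB : IntervalIntegrable (fun t => F (B t)) volume 0 x :=
    (hF.comp (fun t ht => (hB' t ht).continuousAt.continuousWithinAt) hBs').intervalIntegrable
  rw [← integral_comp_eq_integral_div_of_hasDerivAt (v := fun u => R u - 1)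
    (g := fun u => F u - F y) hB' hBs' (hR.sub continuousOn_const)
    (fun u hu => (sub_neg.2 (hR1 u hu)).ne) (hF.sub continuousOn_const),
    intervalIntegral.integral_sub hFB intervalIntegrable_const, intervalIntegral.integral_const,
    sub_zero, smul_eq_mul]

theorem M_limit_and_sign_general
(c : ℝ) (hc : c < 0)
    (F R : ℝ → ℝ) (ε : ℝ) (hε : 0 < ε)
    (hRconv : ConvexOn ℝ (Set.Ioo (c - ε) ε) R)
    (hFC1 : ContDiffOn ℝ 1 F (Set.Ioo (c - ε) ε))
    (hRC1 : ContDiffOn ℝ 1 R (Set.Ioo (c - ε) ε))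
    (hR0 : R 0 = 0) (hRc : R c = 1)
    (hRlt1 : ∀ u ∈ Set.Ioc c 0, R u < 1)
    (B : ℝ → ℝ) (hB0 : B 0 = 0)
    (hBode : ∀ x ≥ (0:ℝ), HasDerivAt B (R (B x) - 1) x)
    (hBrange : ∀ x ≥ (0:ℝ), B x ∈ Set.Ioc c 0)
    (hBlim : Tendsto B atTop (nhds c))
    (A : ℝ → ℝ) (hA : ∀ x, A x = ∫ s in (0:ℝ)..x, F (B s))
    (r : ℝ) (M : ℝ → ℝ)
    (hM : ∀ x ≥ (0:ℝ), M x = (A x - x * F (B x)) + r * (B x - x * (R (B x) - 1))) :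
    Tendsto M atTop
      (nhds (-(∫ u in c..(0:ℝ), (F u - F c) / (R u - 1)) + r * c)) ∧
    (-(∫ u in c..(0:ℝ), (F u - F c) / (R u - 1)) + r * c < 0 ↔
      (1 / c) * (∫ u in c..(0:ℝ), (F u - F c) / (R u - 1)) < r) := by
  set q : ℝ → ℝ := fun u => (F u - F c) / (R u - 1)
  have hsub : Icc c 0 ⊆ Ioo (c - ε) ε := fun u hu => ⟨by linarith [hu.1], by linarith [hu.2]⟩
  have hcmem : c ∈ Icc c 0 := left_mem_Icc.2 hc.le
  obtain ⟨KF, hKF⟩ :=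
    (hFC1.mono hsub).exists_lipschitzOnWith one_ne_zero (convex_Icc c 0) isCompact_Icc
  obtain ⟨KR, hKR⟩ :=
    (hRC1.mono hsub).exists_lipschitzOnWith one_ne_zero (convex_Icc c 0) isCompact_Icc
  have hgap : ∀ u ∈ Ioc c 0, u - c ≤ -c * (1 - R u) := fun u =>
    hRconv.sub_le_neg_mul_one_sub (hsub hcmem) (hsub (right_mem_Icc.2 hc.le)) hRc hR0
  have hBIcc : ∀ᶠ x in atTop, B x ∈ Icc c 0 :=
    (eventually_ge_atTop 0).mono fun x hx => Ioc_subset_Icc_self (hBrange x hx)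
  have hxB : Tendsto (fun x => x * (B x - c)) atTop (𝓝 0) :=
    tendsto_mul_self_of_le_mul_neg_deriv (neg_pos.2 hc) (fun x hx => (hBode x hx).sub_const c)
      (fun x hx => neg_sub (R (B x)) 1 ▸ hgap _ (hBrange x hx))
      (fun x hx => sub_nonneg.2 (hBrange x hx).1.le)
  have hqlim : Tendsto (fun x => ∫ u in (0:ℝ)..B x, q u) atTop (𝓝 (∫ u in (0:ℝ)..c, q u)) := by
    have h := intervalIntegral.continuousOn_primitive_interval' (intervalIntegrable_sub_div_sub_one
      hc.le hKF hKR.continuousOn hRlt1 hgap) right_mem_uIcc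
    rw [uIcc_of_le hc.le] at h
    exact (h c hcmem).tendsto.comp (tendsto_nhdsWithin_iff.2 ⟨hBlim, hBIcc⟩)
  have hMeq : ∀ x ≥ (0:ℝ), M x = (∫ u in (0:ℝ)..B x, q u) - x * (F (B x) - F c) + r * B x
      - r * (x * (R (B x) - R c)) := by
    intro x hx
    have h := integral_comp_sub_mul_eq_integral_div (y := c) hx (hKF.continuousOn.mono
      Ioc_subset_Icc_self) (hKR.continuousOn.mono Ioc_subset_Icc_self) hRlt1 hBode hBrange
    rw [hB0] at h
    rw [hM x hx, hA x, hRc]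
    linear_combination h
  refine ⟨?_, ?_⟩
  · have h := ((hqlim.sub (hKF.tendsto_mul_sub hcmem hBIcc hxB)).add (hBlim.const_mul r)).sub
      ((hKR.tendsto_mul_sub hcmem hBIcc hxB).const_mul r)
    rw [intervalIntegral.integral_symm]
    simpa using h.congr' ((eventually_ge_atTop 0).mono fun x hx => (hMeq x hx).symm)
  · rw [one_div_mul_eq_div, div_lt_iff_of_neg hc]
    constructor <;> intro h <;> linarith

/-- With `M x = (A x − x·F(B x)) + r·(B x − x·(R(B x) − 1))`, the function
`M` converges as `x → ∞` to `−∫_c^0 (F u − F c)/(R u − 1) du + r·c`, and this limit is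
strictly negative iff `r > (1/c)·∫_c^0 (F u − F c)/(R u − 1) du`. -/
theorem M_limit_and_sign
(c : ℝ) (hc : c < 0)
    (F R : ℝ → ℝ) (ε : ℝ) (hε : 0 < ε)
    (hFconv : ConvexOn ℝ (Set.Ioo (c - ε) ε) F)
    (hRconv : ConvexOn ℝ (Set.Ioo (c - ε) ε) R)
    (hFC1 : ContDiffOn ℝ 1 F (Set.Ioo (c - ε) ε))
    (hRC1 : ContDiffOn ℝ 1 R (Set.Ioo (c - ε) ε))
    (hF0 : F 0 = 0) (hR0 : R 0 = 0) (hRc : R c = 1)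
    (hRlt1 : ∀ u ∈ Set.Ioc c 0, R u < 1)
    (hR'c : deriv R c < 0)
    (B : ℝ → ℝ) (hB0 : B 0 = 0)
    (hBode : ∀ x ≥ (0:ℝ), HasDerivAt B (R (B x) - 1) x)
    (hBanti : StrictAntiOn B (Set.Ici 0))
    (hBrange : ∀ x ≥ (0:ℝ), B x ∈ Set.Ioc c 0)
    (hBlim : Tendsto B atTop (nhds c))
    (A : ℝ → ℝ) (hA : ∀ x, A x = ∫ s in (0:ℝ)..x, F (B s))
    (r : ℝ) (M : ℝ → ℝ)
    (hM : ∀ x ≥ (0:ℝ), M x = (A x - x * F (B x)) + r * (B x - x * (R (B x) - 1))) :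
    Tendsto M atTop
      (nhds (-(∫ u in c..(0:ℝ), (F u - F c) / (R u - 1)) + r * c)) ∧
    (-(∫ u in c..(0:ℝ), (F u - F c) / (R u - 1)) + r * c < 0 ↔
      (1 / c) * (∫ u in c..(0:ℝ), (F u - F c) / (R u - 1)) < r) :=
  M_limit_and_sign_general c hc F R ε hε hRconv hFC1 hRC1 hR0 hRc hRlt1 B hB0 hBode hBrange hBlim A
    hA r M hM
end
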